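/- Let n ∈ ℕ, 0 < s < n, and q > n/s. Then there exists a constant C > 0 (depending on n, s, q) such that for every measurable function g on ℝ^n, the weak Lorentz norm ‖ g(y)/(1+|y|)^s ‖_{L^{n/s,∞}(ℝ^n)} ≤ C · M_{L^q} g(0), where M_{L^q} g(0) = sup_{r>0} ( (1/|B(0,r)|) ∫_{B(0,r)} |g|^q )^{1/q}. -/

import Mathlib

open MeasureTheory Metric Set
open scoped ENNReal

/-- Weak Lorentz quasi-norm `‖f‖_{L^{p,∞}} = sup_{λ>0} λ |{|f|>λ}|^{1/p}`. -/
noncomputable def weakLorentzNorm {n : ℕ} (f : EuclideanSpace ℝ (Fin n) → ℝ) (p : ℝ) : ℝ≥0∞ :=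
  ⨆ (l : ℝ) (_ : 0 < l), ENNReal.ofReal l * (volume {x | l < |f x|}) ^ (1 / p)

/-- Centered `L^q` maximal function `M_{L^q} f x`. -/
noncomputable def maxLq {n : ℕ} (f : EuclideanSpace ℝ (Fin n) → ℝ) (q : ℝ)
    (x : EuclideanSpace ℝ (Fin n)) : ℝ≥0∞ :=
  ⨆ (r : ℝ) (_ : 0 < r),
    ((volume (ball x r))⁻¹ * ∫⁻ y in ball x r, ENNReal.ofReal (|f y| ^ q)) ^ (1 / q)

/-!
Fix a level `l > 0` and any `m` exceeding `M_{L^q} g(0)`. Chebyshev on the ball `B(0, r)` gives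
`|{|g| > t} ∩ B(0, r)| ≤ (m / t)^q |B(0, r)|`. A point of `{|g(y)| > l (1 + |y|)^s}` either lies in
`B(0, R)`, where `l R^s = m`, or in a shell `R 2^k ≤ |y| < R 2^(k+1)` on which `|g| > m 2^(ks)`;
that part has measure at most `2^(-ksq) |B(0, R 2^(k+1))| = 2^n (2^n / 2^(sq))^k |B(0, R)|`.
Since `q > n / s` the shells sum to `O(R^n) = O((m / l)^(n/s))`, i.e. `l |{…}|^(s/n) = O(m)`.
-/

lemma setOf_mul_norm_rpow_lt_subset {E : Type*} [SeminormedAddCommGroup E] (f : E → ℝ)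
    {c R s : ℝ} (hc : 0 ≤ c) (hR : 0 < R) (hs : 0 ≤ s) :
    {y | c * ‖y‖ ^ s < |f y|} ⊆
      ball 0 R ∪ ⋃ k : ℕ, {y | c * (R * 2 ^ k) ^ s < |f y|} ∩ ball 0 (R * 2 ^ (k + 1)) := by
  intro y hy
  rcases lt_or_ge ‖y‖ R with hyR | hyR
  · exact Or.inl (mem_ball_zero_iff.mpr hyR)
  obtain ⟨k, hk, hk'⟩ := exists_nat_pow_near ((one_le_div hR).mpr hyR) one_lt_two
  rw [le_div_iff₀ hR, mul_comm] at hk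
  rw [div_lt_iff₀ hR, mul_comm] at hk'
  refine Or.inr (mem_iUnion.mpr ⟨k, ?_, mem_ball_zero_iff.mpr hk'⟩)
  have hkR : c * (R * 2 ^ k) ^ s ≤ c * ‖y‖ ^ s := by gcongr
  exact hkR.trans_lt hy

lemma setOf_lt_abs_div_one_add_norm_rpow_subset {E : Type*} [SeminormedAddCommGroup E]
    (f : E → ℝ) {l s : ℝ} (hl : 0 ≤ l) (hs : 0 ≤ s) :
    {y | l < |f y / (1 + ‖y‖) ^ s|} ⊆ {y | l * ‖y‖ ^ s < |f y|} := by
  intro y (hy : l < |f y / (1 + ‖y‖) ^ s|)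
  have hpos : 0 < (1 + ‖y‖) ^ s := by positivity
  rw [abs_div, abs_of_pos hpos, lt_div_iff₀ hpos] at hy
  have hmono : l * ‖y‖ ^ s ≤ l * (1 + ‖y‖) ^ s := by gcongr; linarith
  exact hmono.trans_lt hy

section MaximalFunction

variable {n : ℕ} {g : EuclideanSpace ℝ (Fin n) → ℝ} {q : ℝ}

lemma lintegral_ball_le_maxLq_rpow_mul_volume (hq : 0 < q) (x : EuclideanSpace ℝ (Fin n))
    {r : ℝ} (hr : 0 < r) :
    ∫⁻ y in ball x r, ENNReal.ofReal (|g y| ^ q) ≤ maxLq g q x ^ q * volume (ball x r) := by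
  have hmean : ((volume (ball x r))⁻¹ * ∫⁻ y in ball x r, ENNReal.ofReal (|g y| ^ q)) ^ (1 / q)
      ≤ maxLq g q x :=
    le_iSup₂ (f := fun r (_ : 0 < r) =>
      ((volume (ball x r))⁻¹ * ∫⁻ y in ball x r, ENNReal.ofReal (|g y| ^ q)) ^ (1 / q)) r hr
  rw [one_div, ENNReal.rpow_inv_le_iff hq, ENNReal.inv_mul_le_iff (measure_ball_pos volume x hr).ne'
    measure_ball_lt_top.ne, mul_comm] at hmean
  exact hmean

lemma volume_lt_abs_inter_ball_le (hg : Measurable g) (hq : 0 < q)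
    (x : EuclideanSpace ℝ (Fin n)) {t r : ℝ} (ht : 0 < t) (hr : 0 < r) :
    volume ({y | t < |g y|} ∩ ball x r)
      ≤ (maxLq g q x / ENNReal.ofReal t) ^ q * volume (ball x r) := by
  have hcheb : ENNReal.ofReal t ^ q * volume ({y | t < |g y|} ∩ ball x r)
      ≤ maxLq g q x ^ q * volume (ball x r) :=
    calc ENNReal.ofReal t ^ q * volume ({y | t < |g y|} ∩ ball x r)
        = ∫⁻ _ in {y | t < |g y|} ∩ ball x r, ENNReal.ofReal (t ^ q) := by
          rw [setLIntegral_const, ENNReal.ofReal_rpow_of_nonneg ht.le hq.le]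
      _ ≤ ∫⁻ y in {y | t < |g y|} ∩ ball x r, ENNReal.ofReal (|g y| ^ q) :=
          setLIntegral_mono (hg.abs.pow_const q).ennreal_ofReal fun y hy =>
            ENNReal.ofReal_le_ofReal (Real.rpow_le_rpow ht.le hy.1.le hq.le)
      _ ≤ ∫⁻ y in ball x r, ENNReal.ofReal (|g y| ^ q) := lintegral_mono_set inter_subset_right
      _ ≤ maxLq g q x ^ q * volume (ball x r) :=
          lintegral_ball_le_maxLq_rpow_mul_volume hq x hr
  have htq : ENNReal.ofReal t ^ q ≠ 0 := (ENNReal.rpow_pos (by simpa using ht) (by simp)).ne'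
  rw [mul_comm, ← ENNReal.le_div_iff_mul_le (Or.inl htq) (Or.inl (by simp [hq.le]))] at hcheb
  rwa [ENNReal.div_rpow_of_nonneg _ _ hq.le, div_eq_mul_inv, mul_right_comm, ← div_eq_mul_inv]

lemma volume_dyadic_shell_le (hg : Measurable g) (hq : 0 < q) {s m R : ℝ} (hm : 0 < m)
    (hR : 0 < R) (hM : maxLq g q 0 ≤ ENNReal.ofReal m) (k : ℕ) :
    volume ({y | m * (2 ^ k) ^ s < |g y|} ∩ ball (0 : EuclideanSpace ℝ (Fin n)) (R * 2 ^ (k + 1)))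
      ≤ ENNReal.ofReal (R ^ n * 2 ^ n * (2 ^ n / 2 ^ (s * q)) ^ k)
        * volume (ball (0 : EuclideanSpace ℝ (Fin n)) 1) := by
  have ht : 0 < m * (2 ^ k) ^ s := by positivity
  have hr : 0 < R * 2 ^ (k + 1) := by positivity
  have hratio : (m / (m * (2 ^ k) ^ s)) ^ q * (R * 2 ^ (k + 1)) ^ n
      = R ^ n * 2 ^ n * (2 ^ n / 2 ^ (s * q)) ^ k := by
    rw [div_mul_cancel_left₀ hm.ne', Real.inv_rpow (by positivity), ← Real.rpow_mul (by positivity),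
      ← Real.rpow_pow_comm zero_le_two, div_pow]
    ring
  calc _ ≤ (maxLq g q 0 / ENNReal.ofReal (m * (2 ^ k) ^ s)) ^ q
        * volume (ball (0 : EuclideanSpace ℝ (Fin n)) (R * 2 ^ (k + 1))) :=
        volume_lt_abs_inter_ball_le hg hq 0 ht hr
    _ ≤ ENNReal.ofReal ((m / (m * (2 ^ k) ^ s)) ^ q)
          * (ENNReal.ofReal ((R * 2 ^ (k + 1)) ^ n)
            * volume (ball (0 : EuclideanSpace ℝ (Fin n)) 1)) := by
        rw [Measure.addHaar_ball_of_pos volume 0 hr, finrank_euclideanSpace_fin,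
          ← ENNReal.ofReal_rpow_of_nonneg (by positivity) hq.le, ENNReal.ofReal_div_of_pos ht]
        gcongr
    _ = _ := by rw [← mul_assoc, ← ENNReal.ofReal_mul (by positivity), hratio]

/-- `|B(0, 1)| (1 + 2^n ∑ₖ (2^n / 2^(sq))^k)`: the ball `B(0, R)` plus the dyadic shells,
at `R = 1`. -/
noncomputable def levelSetConst (n : ℕ) (s q : ℝ) : ℝ≥0∞ :=
  ENNReal.ofReal (1 + 2 ^ n / (1 - 2 ^ n / 2 ^ (s * q)))
    * volume (ball (0 : EuclideanSpace ℝ (Fin n)) 1)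

lemma two_pow_div_two_rpow_lt_one {s q : ℝ} (hnsq : (n : ℝ) < s * q) :
    (2 : ℝ) ^ n / 2 ^ (s * q) < 1 := by
  rw [div_lt_one (by positivity), ← Real.rpow_natCast]
  exact Real.rpow_lt_rpow_of_exponent_lt one_lt_two hnsq

lemma levelSetConst_rpow_ne_zero {s : ℝ} (hnsq : (n : ℝ) < s * q) (t : ℝ) :
    levelSetConst n s q ^ t ≠ 0 := by
  have h1ρ : 0 < 1 - (2 : ℝ) ^ n / 2 ^ (s * q) := sub_pos.mpr (two_pow_div_two_rpow_lt_one hnsq)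
  refine (ENNReal.rpow_pos (pos_iff_ne_zero.mpr ?_) ?_).ne'
  · exact mul_ne_zero (ENNReal.ofReal_pos.mpr (by positivity)).ne'
      (measure_ball_pos volume 0 one_pos).ne'
  · exact ENNReal.mul_ne_top ENNReal.ofReal_ne_top measure_ball_lt_top.ne

lemma levelSetConst_rpow_ne_top (s : ℝ) {t : ℝ} (ht : 0 ≤ t) : levelSetConst n s q ^ t ≠ ⊤ :=
  ENNReal.rpow_ne_top_of_nonneg ht (ENNReal.mul_ne_top ENNReal.ofReal_ne_top measure_ball_lt_top.ne)

lemma volume_setOf_mul_norm_rpow_lt_le (hg : Measurable g) {s : ℝ} (hs : 0 < s)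
    (hnsq : (n : ℝ) < s * q) {l m : ℝ} (hl : 0 < l) (hm : 0 < m)
    (hM : maxLq g q 0 ≤ ENNReal.ofReal m) :
    volume {y | l * ‖y‖ ^ s < |g y|}
      ≤ ENNReal.ofReal ((m / l) ^ ((n : ℝ) / s)) * levelSetConst n s q := by
  have hq : 0 < q := pos_of_mul_pos_right (n.cast_nonneg.trans_lt hnsq) hs.le
  set ρ : ℝ := 2 ^ n / 2 ^ (s * q)
  have hρ0 : 0 ≤ ρ := by positivity
  have hρ1 : ρ < 1 := two_pow_div_two_rpow_lt_one hnsq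
  have h1ρ : 0 < 1 - ρ := sub_pos.mpr hρ1
  set R : ℝ := (m / l) ^ (1 / s)
  have hR : 0 < R := by positivity
  have hRn : R ^ n = (m / l) ^ ((n : ℝ) / s) := by
    rw [← Real.rpow_natCast, ← Real.rpow_mul (div_pos hm hl).le, one_div_mul_eq_div]
  have hthreshold (k : ℕ) : l * (R * 2 ^ k) ^ s = m * (2 ^ k) ^ s := by
    rw [Real.mul_rpow hR.le (by positivity), ← Real.rpow_mul (div_pos hm hl).le,
      one_div_mul_cancel hs.ne', Real.rpow_one, ← mul_assoc, mul_div_cancel₀ _ hl.ne']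
  have hcover := setOf_mul_norm_rpow_lt_subset g hl.le hR hs.le
  simp only [hthreshold] at hcover
  calc volume {y | l * ‖y‖ ^ s < |g y|}
      ≤ volume (ball (0 : EuclideanSpace ℝ (Fin n)) R) + ∑' k : ℕ,
          volume ({y | m * (2 ^ k) ^ s < |g y|} ∩ ball 0 (R * 2 ^ (k + 1))) :=
        (measure_mono hcover).trans
          ((measure_union_le _ _).trans (add_le_add_right (measure_iUnion_le _) _))
    _ ≤ ENNReal.ofReal (R ^ n) * volume (ball (0 : EuclideanSpace ℝ (Fin n)) 1)
          + ∑' k : ℕ, ENNReal.ofReal (R ^ n * 2 ^ n * ρ ^ k)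
            * volume (ball (0 : EuclideanSpace ℝ (Fin n)) 1) := by
        rw [Measure.addHaar_ball_of_pos volume 0 hR, finrank_euclideanSpace_fin]
        gcongr with k
        exact volume_dyadic_shell_le hg hq hm hR hM k
    _ = ENNReal.ofReal (R ^ n * (1 + 2 ^ n / (1 - ρ)))
          * volume (ball (0 : EuclideanSpace ℝ (Fin n)) 1) := by
        rw [ENNReal.tsum_mul_right, ← ENNReal.ofReal_tsum_of_nonneg (fun k => by positivity)
          ((summable_geometric_of_lt_one hρ0 hρ1).mul_left _), tsum_mul_left,
          tsum_geometric_of_lt_one hρ0 hρ1, ← add_mul, ← ENNReal.ofReal_add (by positivity)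
          (by positivity)]
        congr 2
        ring
    _ = ENNReal.ofReal ((m / l) ^ ((n : ℝ) / s)) * levelSetConst n s q := by
        rw [hRn, levelSetConst, ENNReal.ofReal_mul (by positivity), mul_assoc]

theorem weakLorentzNorm_div_one_add_norm_rpow_le (hn : 0 < n) (hg : Measurable g) {s : ℝ}
    (hs : 0 < s) (hnsq : (n : ℝ) < s * q) :
    weakLorentzNorm (fun y => g y / (1 + ‖y‖) ^ s) ((n : ℝ) / s)
      ≤ levelSetConst n s q ^ (1 / ((n : ℝ) / s)) * maxLq g q 0 := by
  set p : ℝ := (n : ℝ) / s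
  have hp : 0 < p := by positivity
  set K := levelSetConst n s q
  have hK0 : K ^ (1 / p) ≠ 0 := levelSetConst_rpow_ne_zero hnsq _
  have hKtop : K ^ (1 / p) ≠ ⊤ := levelSetConst_rpow_ne_top s (by positivity)
  refine iSup₂_le fun l hl => ?_
  rw [mul_comm (K ^ (1 / p)), ← ENNReal.div_le_iff hK0 hKtop]
  refine le_of_forall_gt_imp_ge_of_dense fun b hb => ?_
  rcases eq_top_or_lt_top b with rfl | hbtop
  · exact le_top
  have hm : 0 < b.toReal := ENNReal.toReal_pos (pos_of_gt hb).ne' hbtop.ne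
  have hM : maxLq g q 0 ≤ ENNReal.ofReal b.toReal := by
    rw [ENNReal.ofReal_toReal hbtop.ne]
    exact hb.le
  rw [ENNReal.div_le_iff hK0 hKtop, ← ENNReal.ofReal_toReal hbtop.ne]
  calc ENNReal.ofReal l * volume {y | l < |g y / (1 + ‖y‖) ^ s|} ^ (1 / p)
      ≤ ENNReal.ofReal l * (ENNReal.ofReal ((b.toReal / l) ^ p) * K) ^ (1 / p) := by
        gcongr
        exact (measure_mono (setOf_lt_abs_div_one_add_norm_rpow_subset g hl.le hs.le)).trans
          (volume_setOf_mul_norm_rpow_lt_le hg hs hnsq hl hm hM)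
    _ = ENNReal.ofReal b.toReal * K ^ (1 / p) := by
        rw [ENNReal.mul_rpow_of_nonneg _ _ (by positivity),
          ENNReal.ofReal_rpow_of_nonneg (by positivity) (by positivity),
          ← Real.rpow_mul (by positivity), mul_one_div_cancel hp.ne', Real.rpow_one, ← mul_assoc,
          ← ENNReal.ofReal_mul hl.le, mul_div_cancel₀ _ hl.ne']

end MaximalFunction

theorem statement0 (n : ℕ) (hn : 0 < n) (s q : ℝ) (hs0 : 0 < s)
    (hq : (n : ℝ) / s < q) :
    ∃ C : ℝ, 0 < C ∧ ∀ g : EuclideanSpace ℝ (Fin n) → ℝ, Measurable g →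
      weakLorentzNorm (fun y => g y / (1 + ‖y‖) ^ s) ((n : ℝ) / s)
        ≤ ENNReal.ofReal C * maxLq g q 0 := by
  have hnsq : (n : ℝ) < s * q := by rwa [div_lt_iff₀ hs0, mul_comm] at hq
  set A := levelSetConst n s q ^ (1 / ((n : ℝ) / s))
  have hAtop : A ≠ ⊤ := levelSetConst_rpow_ne_top s (by positivity)
  refine ⟨A.toReal, ENNReal.toReal_pos (levelSetConst_rpow_ne_zero hnsq _) hAtop, fun g hg => ?_⟩
  rw [ENNReal.ofReal_toReal hAtop]
  exact weakLorentzNorm_div_one_add_norm_rpow_le hn hg hs0 hnsq
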